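/- arXiv:2510.12591 — 3 statements merged into one kernel-verified Lean document; each statement's English description precedes it below -/
import Mathlib

section
/- Let M_1, …, M_n, N_1, …, N_n be nonzero d×d complex matrices satisfying: N_j M_i = 0 iff i ≠ j, M_j N_i = 0 iff i ≠ j, and M_j M_i = 0 for all i, j. Then dim(∑_i (range M_i + range N_i)) ≥ 3n − d. In particular 2d ≥ 3n. -/
theorem stmt_1 (n d : ℕ)
    (M N : Fin n → ((Fin d → ℂ) →ₗ[ℂ] (Fin d → ℂ)))
    (hM : ∀ i, M i ≠ 0) (hN : ∀ i, N i ≠ 0)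
    (h1 : ∀ i j : Fin n, N j ∘ₗ M i = 0 ↔ i ≠ j)
    (h2 : ∀ i j : Fin n, M j ∘ₗ N i = 0 ↔ i ≠ j)
    (h3 : ∀ i j : Fin n, M j ∘ₗ M i = 0) :
    3 * n - d ≤ Module.finrank ℂ
      ↥(⨆ i, (LinearMap.range (M i) ⊔ LinearMap.range (N i))) ∧
    3 * n ≤ 2 * d := by
  classical
  set V := ⨆ i, (LinearMap.range (M i) ⊔ LinearMap.range (N i)) with hV
  have hNM : ∀ i, N i ∘ₗ M i ≠ 0 := fun i h => (h1 i i).mp h rfl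
  have hMN : ∀ i, M i ∘ₗ N i ≠ 0 := fun i h => (h2 i i).mp h rfl
  have hx : ∀ i, ∃ x, N i (M i x) ≠ 0 := by
    intro i
    by_contra h
    push_neg at h
    exact hNM i (LinearMap.ext fun x => h x)
  have hy : ∀ i, ∃ y, M i (N i y) ≠ 0 := by
    intro i
    by_contra h
    push_neg at h
    exact hMN i (LinearMap.ext fun y => h y)
  choose x hxne using hx
  choose y hyne using hy
  set v : (Fin n ⊕ Fin n) → (Fin d → ℂ) :=
    Sum.elim (fun i => M i (x i)) (fun i => N i (y i)) with hv
  have hmem : ∀ k, v k ∈ V := by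
    intro k
    cases k with
    | inl i =>
        exact Submodule.mem_iSup_of_mem i
          (Submodule.mem_sup_left (LinearMap.mem_range_self _ _))
    | inr i =>
        exact Submodule.mem_iSup_of_mem i
          (Submodule.mem_sup_right (LinearMap.mem_range_self _ _))
  have hMM : ∀ i j, M j (M i (x i)) = 0 := by
    intro i j
    have := LinearMap.congr_fun (h3 i j) (x i)
    simpa using this
  have hMNij : ∀ i j, i ≠ j → M j (N i (y i)) = 0 := by
    intro i j hij
    have := LinearMap.congr_fun ((h2 i j).mpr hij) (y i)
    simpa using this
  have hNMij : ∀ i j, i ≠ j → N j (M i (x i)) = 0 := by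
    intro i j hij
    have := LinearMap.congr_fun ((h1 i j).mpr hij) (x i)
    simpa using this
  have hind : LinearIndependent ℂ v := by
    rw [Fintype.linearIndependent_iff]
    intro g hg
    rw [Fintype.sum_sum_type] at hg
    simp only [hv, Sum.elim_inl, Sum.elim_inr] at hg
    -- first kill the inr coefficients using M j
    have hr : ∀ j, g (Sum.inr j) = 0 := by
      intro j
      have h0 := congrArg (M j) hg
      rw [map_add, map_sum, map_sum, map_zero] at h0
      simp only [map_smul] at h0
      have e1 : ∀ i ∈ Finset.univ, g (Sum.inl i) • M j (M i (x i)) = 0 := by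
        intro i _
        rw [hMM i j, smul_zero]
      rw [Finset.sum_eq_zero e1, zero_add] at h0
      rw [Finset.sum_eq_single j] at h0
      · exact (smul_eq_zero.mp h0).resolve_right (hyne j)
      · intro i _ hij
        rw [hMNij i j hij, smul_zero]
      · intro h
        exact absurd (Finset.mem_univ j) h
    -- now the remaining sum of inl terms is zero
    have hg' : ∑ i : Fin n, g (Sum.inl i) • M i (x i) = 0 := by
      have : ∑ i : Fin n, g (Sum.inr i) • N i (y i) = 0 :=
        Finset.sum_eq_zero fun i _ => by rw [hr i, zero_smul]
      rw [this, add_zero] at hg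
      exact hg
    have hl : ∀ j, g (Sum.inl j) = 0 := by
      intro j
      have h0 := congrArg (N j) hg'
      rw [map_sum, map_zero] at h0
      simp only [map_smul] at h0
      rw [Finset.sum_eq_single j] at h0
      · exact (smul_eq_zero.mp h0).resolve_right (hxne j)
      · intro i _ hij
        rw [hNMij i j hij, smul_zero]
      · intro h
        exact absurd (Finset.mem_univ j) h
    intro k
    cases k with
    | inl i => exact hl i
    | inr i => exact hr i
  -- conclude: finrank V ≥ 2n
  have hspan : Submodule.span ℂ (Set.range v) ≤ V := by
    rw [Submodule.span_le]
    rintro _ ⟨k, rfl⟩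
    exact hmem k
  have hb : (2 * n : ℕ) ≤ Module.finrank ℂ V := by
    have := finrank_span_eq_card hind
    have hle := Submodule.finrank_mono hspan
    rw [this] at hle
    simpa [Fintype.card_sum, two_mul] using hle
  have hd : Module.finrank ℂ V ≤ d := by
    have := Submodule.finrank_le V
    simpa using this
  constructor
  · omega
  · omega
end

section
/- Let M_1, …, M_n, N_1, …, N_n be d×d complex matrices with M_j M_i = 0 for all i, j, M_j N_i = 0 whenever i ≠ j, and M_i N_i ≠ 0 for all i. Then the intersection (∑_i range M_i) ∩ (∑_i range N_i) has dimension at most d − n. -/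
/-!
Let `Φ = (M_1, …, M_n)`. Since `M_j M_i = 0`, every `range M_i` lies in `ker Φ`. Choosing `v_i` with
`M_i N_i v_i ≠ 0`, the vectors `Φ (N_i v_i)` are nonzero and supported on distinct coordinates,
so `rank Φ ≥ n` and, by rank–nullity, `dim ker Φ ≤ d - n`.
-/

open Module

namespace LinearMap

theorem iSup_range_le_ker_pi {R V W ι κ : Type*} [Semiring R] [AddCommMonoid V] [Module R V]
    [AddCommMonoid W] [Module R W] (f : ι → V →ₗ[R] V) (g : κ → V →ₗ[R] W)
    (h : ∀ i j, g j ∘ₗ f i = 0) : ⨆ i, range (f i) ≤ ker (pi g) := by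
  rw [ker_pi]
  exact iSup_le fun i => le_iInf fun j => range_le_ker_iff.mpr (h i j)

variable {K V W ι : Type*} [Field K] [AddCommGroup V] [Module K V] [AddCommGroup W] [Module K W]
  [Fintype ι] [FiniteDimensional K V]

theorem card_le_finrank_range_pi (f : ι → V →ₗ[K] W) (x : ι → V)
    (hx : ∀ i j, i ≠ j → f j (x i) = 0) (hxx : ∀ i, f i (x i) ≠ 0) :
    Fintype.card ι ≤ finrank K (range (pi f)) := by
  classical
  have hsingle : ∀ i, pi f (x i) = Pi.single i (f i (x i)) := fun i => by
    funext j
    rcases eq_or_ne j i with rfl | hji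
    · simp
    · simp [Pi.single_eq_of_ne hji, hx i j hji.symm]
  have hli : LinearIndependent K (fun i => pi f (x i)) := by
    simpa only [hsingle] using Pi.linearIndependent_single_of_ne_zero hxx
  calc Fintype.card ι = finrank K (Submodule.span K (Set.range fun i => pi f (x i))) :=
        (finrank_span_eq_card hli).symm
    _ ≤ finrank K (range (pi f)) :=
        Submodule.finrank_mono <| Submodule.span_le.mpr <| Set.range_subset_iff.mpr fun i =>
          mem_range_self _ _

theorem finrank_ker_pi_add_card_le (f : ι → V →ₗ[K] W) (x : ι → V)
    (hx : ∀ i j, i ≠ j → f j (x i) = 0) (hxx : ∀ i, f i (x i) ≠ 0) :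
    finrank K (ker (pi f)) + Fintype.card ι ≤ finrank K V := by
  have := finrank_range_add_finrank_ker (pi f)
  have := card_le_finrank_range_pi f x hx hxx
  omega

end LinearMap

theorem stmt_2 (n d : ℕ)
    (M N : Fin n → ((Fin d → ℂ) →ₗ[ℂ] (Fin d → ℂ)))
    (hMM : ∀ i j : Fin n, M j ∘ₗ M i = 0)
    (hMN : ∀ i j : Fin n, i ≠ j → M j ∘ₗ N i = 0)
    (hMNne : ∀ i : Fin n, M i ∘ₗ N i ≠ 0) :
    Module.finrank ℂ
      ↥((⨆ i, LinearMap.range (M i)) ⊓ (⨆ i, LinearMap.range (N i))) ≤ d - n := by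
  have hv : ∀ i, ∃ v, M i (N i v) ≠ 0 := fun i => by
    by_contra! h
    exact hMNne i (LinearMap.ext h)
  choose v hv using hv
  have hrank := LinearMap.finrank_ker_pi_add_card_le M (fun i => N i (v i))
    (fun i j hij => LinearMap.congr_fun (hMN i j hij) (v i)) hv
  have hker : finrank ℂ ↥((⨆ i, LinearMap.range (M i)) ⊓ (⨆ i, LinearMap.range (N i))) ≤
      finrank ℂ (LinearMap.ker (LinearMap.pi M)) :=
    Submodule.finrank_mono <| inf_le_left.trans (LinearMap.iSup_range_le_ker_pi M M hMM)
  simp only [Fintype.card_fin, finrank_fin_fun] at hrank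
  omega
end

section
/- Let H_1, …, H_n be non-solvable groups and let ρ : H_1 × ⋯ × H_n → GL_d(ℂ) be a faithful linear representation. Then d ≥ 2n. -/
/-!
Induct on `dim V`, for a family of pairwise commuting representations `ρ i` of groups `G i` on `V`
whose images are not solvable.

If a proper nonzero subspace `W` is invariant under every `ρ i`, then any two elements acting
trivially on both `W` and `V ⧸ W` commute (they are `1 + N` with `N V ⊆ W ⊆ ker N`, so the products
of the `N`s vanish). So each `ρ i` keeps a non-solvable image on `W` or on `V ⧸ W`, and the bounds
for `W` and `V ⧸ W` add up.

Otherwise pick an irreducible `G i₀`-subspace `W₀` and let `M` be the space of `G i₀`-intertwiners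
`W₀ → V`. Their images span `V`, so the other `G i` act faithfully on `M` by composition. Jacobson
density shows that `W₀ ⊗ M → V` is injective, and `dim W₀ ≥ 2` because otherwise the image of `G i₀`
would be abelian. Hence `2 (n - 1) ≤ dim M ≤ dim V / 2` with `dim M ≥ 1`, which gives `2 n ≤ dim V`.
-/

open Module

universe u v w x

theorem derivedSeries_succ_le_ker {G M : Type*} [Group G] [Monoid M] (f : G →* M)
    {H : Subgroup G} {n : ℕ} (hn : derivedSeries G n ≤ H)
    (hH : ∀ x ∈ H, ∀ y ∈ H, Commute (f x) (f y)) : derivedSeries G (n + 1) ≤ f.ker := by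
  rw [derivedSeries_succ, Subgroup.commutator_le]
  intro x hx y hy
  rw [MonoidHom.mem_ker, commutatorElement_def, map_mul, map_mul, map_mul,
    (hH x (hn hx) y (hn hy)).eq, mul_assoc (f y), ← map_mul, mul_inv_cancel, map_one, mul_one,
    ← map_mul, mul_inv_cancel, map_one]

theorem Module.End.commute_of_finrank_eq_one {K V : Type*} [Field K] [AddCommGroup V]
    [Module K V] (hV : finrank K V = 1) (a b : Module.End K V) : Commute a b := by
  obtain ⟨c, rfl, -⟩ := a.existsUnique_eq_smul_id_of_finrank_eq_one hV
  obtain ⟨d, rfl, -⟩ := b.existsUnique_eq_smul_id_of_finrank_eq_one hV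
  exact ((Commute.one_left _).smul_left c).smul_right d

namespace Representation

section

variable {K G H V W : Type*} [Field K] [Group G] [Group H]
  [AddCommGroup V] [Module K V] [AddCommGroup W] [Module K W]

section Invariant

variable (ρ : Representation K G V) (W₀ : Submodule K V) (hW₀ : ∀ g, W₀ ≤ W₀.comap (ρ g))

theorem apply_apply_of_mem_ker_subrepresentation_of_mem_ker_quotient {x y : G}
    (hx : x ∈ (ρ.subrepresentation W₀ hW₀).ker) (hy : y ∈ (ρ.quotient W₀ hW₀).ker) (v : V) :
    ρ x (ρ y v) = ρ x v + ρ y v - v := by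
  have hfix : ∀ w ∈ W₀, ρ x w = w := fun w hw =>
    congrArg Subtype.val (LinearMap.congr_fun (MonoidHom.mem_ker.mp hx) ⟨w, hw⟩)
  have hmod : ρ y v - v ∈ W₀ :=
    (Submodule.Quotient.eq W₀).mp (LinearMap.congr_fun (MonoidHom.mem_ker.mp hy) (W₀.mkQ v))
  rw [← add_sub_cancel v (ρ y v), map_add, hfix _ hmod]
  abel

theorem commute_of_mem_ker_subrepresentation_inf_ker_quotient {x y : G}
    (hx : x ∈ (ρ.subrepresentation W₀ hW₀).ker ⊓ (ρ.quotient W₀ hW₀).ker)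
    (hy : y ∈ (ρ.subrepresentation W₀ hW₀).ker ⊓ (ρ.quotient W₀ hW₀).ker) :
    Commute (ρ x) (ρ y) := by
  ext v
  simp only [Module.End.mul_apply]
  rw [apply_apply_of_mem_ker_subrepresentation_of_mem_ker_quotient ρ W₀ hW₀ hx.1 hy.2,
    apply_apply_of_mem_ker_subrepresentation_of_mem_ker_quotient ρ W₀ hW₀ hy.1 hx.2]
  abel

theorem not_le_ker_subrepresentation_or_quotient (hρ : ∀ n, ¬ derivedSeries G n ≤ ρ.ker) :
    (∀ n, ¬ derivedSeries G n ≤ (ρ.subrepresentation W₀ hW₀).ker) ∨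
      ∀ n, ¬ derivedSeries G n ≤ (ρ.quotient W₀ hW₀).ker := by
  by_contra! ⟨⟨a, ha⟩, ⟨b, hb⟩⟩
  refine hρ (max a b + 1) (derivedSeries_succ_le_ker ρ (le_inf ?_ ?_)
    fun x hx y hy => commute_of_mem_ker_subrepresentation_inf_ker_quotient ρ W₀ hW₀ hx hy)
  · exact (derivedSeries_antitone G (le_max_left a b)).trans ha
  · exact (derivedSeries_antitone G (le_max_right a b)).trans hb

end Invariant

section Commute

variable {ρ : Representation K G V} {π : Representation K H V} (hc : ∀ g h, Commute (ρ g) (π h))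
  (W₀ : Submodule K V) (hρ : ∀ g, W₀ ≤ W₀.comap (ρ g)) (hπ : ∀ h, W₀ ≤ W₀.comap (π h))
include hc

theorem commute_subrepresentation (g : G) (h : H) :
    Commute (ρ.subrepresentation W₀ hρ g) (π.subrepresentation W₀ hπ h) := by
  ext w
  exact LinearMap.congr_fun (hc g h) w

theorem commute_quotient (g : G) (h : H) :
    Commute (ρ.quotient W₀ hρ g) (π.quotient W₀ hπ h) := by
  ext v
  exact congrArg W₀.mkQ (LinearMap.congr_fun (hc g h) v)

end Commute

theorem exists_isIrreducible_subrepresentation [FiniteDimensional K V] [Nontrivial V]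
    (ρ : Representation K G V) :
    ∃ (W₀ : Submodule K V) (hW₀ : ∀ g, W₀ ≤ W₀.comap (ρ g)),
      W₀ ≠ ⊥ ∧ (ρ.subrepresentation W₀ hW₀).IsIrreducible := by
  obtain ⟨W₀, ⟨hW₀, hinv⟩, hmin⟩ := wellFounded_lt.has_min
    {U : Submodule K V | U ≠ ⊥ ∧ ∀ g, U ≤ U.comap (ρ g)} ⟨⊤, top_ne_bot, fun _ => le_top⟩
  have : Nontrivial W₀ := Submodule.nontrivial_iff_ne_bot.mpr hW₀
  refine ⟨W₀, hinv, hW₀,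
    { exists_pair_ne := ⟨⊥, ⊤, fun h => ?_⟩, eq_bot_or_eq_top := fun P => ?_ }⟩
  · exact bot_ne_top (congrArg Subrepresentation.toSubmodule h)
  let U := P.toSubmodule.map W₀.subtype
  have hU : ∀ g, U ≤ U.comap (ρ g) := by
    rintro g _ ⟨w, hw, rfl⟩
    exact ⟨_, P.apply_mem_toSubmodule g hw, rfl⟩
  by_cases hUbot : U = ⊥
  · left
    ext1
    exact Submodule.map_injective_of_injective W₀.injective_subtype
      (hUbot.trans (Submodule.map_bot _).symm)
  · right
    have hUW : U = W₀ := (Submodule.map_subtype_le W₀ _).eq_of_not_lt (hmin U ⟨hUbot, hU⟩)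
    ext1
    apply Submodule.map_injective_of_injective W₀.injective_subtype
    change U = (⊤ : Submodule K W₀).map W₀.subtype
    rw [hUW, Submodule.map_top, Submodule.range_subtype]

def subtypeIntertwiningMap (ρ : Representation K G V) (W₀ : Submodule K V)
    (hW₀ : ∀ g, W₀ ≤ W₀.comap (ρ g)) : IntertwiningMap (ρ.subrepresentation W₀ hW₀) ρ :=
  W₀.subtype.intertwiningMap_of_isIntertwiningMap _ ρ fun _ _ => rfl

theorem IntertwiningMap.map_asAlgebraHom {ρ : Representation K G V} {σ : Representation K G W}
    (f : IntertwiningMap ρ σ) (r : MonoidAlgebra K G) (v : V) :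
    f (ρ.asAlgebraHom r v) = σ.asAlgebraHom r (f v) := by
  induction r using MonoidAlgebra.induction_linear with
  | zero => simp
  | add x y hx hy => simp [hx, hy]
  | single g a => simp [f.isIntertwining]

section Density

variable [IsAlgClosed K] [FiniteDimensional K V]

/- Jacobson density: by Schur's lemma every `K`-linear map of `V` commutes with
`End_{K[G]} V = K`, so it agrees with an element of `K[G]` on any finite set. -/
theorem exists_asAlgebraHom_eq_on (ρ : Representation K G V) [ρ.IsIrreducible]
    (φ : V →ₗ[K] V) (s : Finset V) :
    ∃ r : MonoidAlgebra K G, ∀ v ∈ s, ρ.asAlgebraHom r v = φ v := by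
  have schur := IsSimpleModule.algebraMap_end_bijective_of_isAlgClosed K
    (A := MonoidAlgebra K G) (V := ρ.asModule)
  let f : Module.End (Module.End (MonoidAlgebra K G) ρ.asModule) ρ.asModule :=
    { toFun := fun m => ρ.asModuleEquiv.symm (φ (ρ.asModuleEquiv m))
      map_add' := by simp
      map_smul' := fun ψ m => by
        obtain ⟨c, rfl⟩ := schur.2 ψ
        simp }
  obtain ⟨r, hr⟩ := jacobson_density f (s.map ρ.asModuleEquiv.symm.toEquiv.toEmbedding)
  refine ⟨r, fun v hv => ?_⟩
  have := congrArg ρ.asModuleEquiv (hr (ρ.asModuleEquiv.symm v) (Finset.mem_map_of_mem _ hv))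
  rw [asModuleEquiv_map_smul] at this
  simpa [f] using this.symm

namespace IntertwiningMap

theorem eq_zero_of_sum_apply_eq_zero {κ : Type*} [Fintype κ]
    {ρ : Representation K G V} [ρ.IsIrreducible] {σ : Representation K G W}
    {b : κ → IntertwiningMap ρ σ} (hb : LinearIndependent K b) {v : κ → V}
    (hv : ∑ t, b t (v t) = 0) : v = 0 := by
  classical
  have hφ : ∀ φ : V →ₗ[K] V, ∑ t, b t (φ (v t)) = 0 := by
    intro φ
    obtain ⟨r, hr⟩ := ρ.exists_asAlgebraHom_eq_on φ (Finset.univ.image v)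
    calc ∑ t, b t (φ (v t)) = ∑ t, b t (ρ.asAlgebraHom r (v t)) := by
          simp only [hr _ (Finset.mem_image_of_mem v (Finset.mem_univ _))]
      _ = σ.asAlgebraHom r (∑ t, b t (v t)) := by simp [map_asAlgebraHom, map_sum]
      _ = 0 := by rw [hv, map_zero]
  funext t
  refine (Module.forall_dual_apply_eq_zero_iff K (v t)).mp fun l => ?_
  have hl : ∑ s, l (v s) • b s = 0 := by
    ext u
    simpa [IntertwiningMap.sum_apply] using hφ (l.smulRight u)
  exact Fintype.linearIndependent_iff.mp hb _ hl t

theorem finrank_mul_finrank_le [FiniteDimensional K W]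
    (ρ : Representation K G V) [ρ.IsIrreducible] (σ : Representation K G W) :
    finrank K (IntertwiningMap ρ σ) * finrank K V ≤ finrank K W := by
  let b := Module.finBasis K (IntertwiningMap ρ σ)
  have hinj : Function.Injective (LinearMap.lsum K (fun _ => V) K fun t => (b t).toLinearMap) := by
    rw [← LinearMap.ker_eq_bot, LinearMap.ker_eq_bot']
    exact fun v hv => eq_zero_of_sum_apply_eq_zero b.linearIndependent (by simpa using hv)
  simpa [finrank_pi_fintype, mul_comm] using LinearMap.finrank_le_finrank_of_injective hinj

end IntertwiningMap

end Density

namespace IntertwiningMap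

variable {H' U : Type*} [Group H'] [AddCommGroup U] [Module K U]
  {ρ : Representation K G V} {σ : Representation K G W}

variable (ρ) in
def compRep (π : Representation K H W) (hπ : ∀ h g, Commute (π h) (σ g)) :
    Representation K H (IntertwiningMap ρ σ) where
  toFun h := llcomp ρ σ σ
    ((π h).intertwiningMap_of_isIntertwiningMap σ σ fun g v => LinearMap.congr_fun (hπ h g) v)
  map_one' := by
    ext f v
    change π 1 (f v) = f v
    simp
  map_mul' h h' := by
    ext f v
    change π (h * h') (f v) = π h (π h' (f v))
    simp

@[simp] theorem compRep_apply_apply (π : Representation K H W)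
    (hπ : ∀ h g, Commute (π h) (σ g)) (h : H) (f : IntertwiningMap ρ σ) (v : V) :
    compRep ρ π hπ h f v = π h (f v) := rfl

theorem commute_compRep {π : Representation K H W} {π' : Representation K H' W}
    (hπ : ∀ h g, Commute (π h) (σ g)) (hπ' : ∀ h g, Commute (π' h) (σ g))
    (hc : ∀ h h', Commute (π h) (π' h')) (h : H) (h' : H') :
    Commute (compRep ρ π hπ h) (compRep ρ π' hπ' h') := by
  ext f v
  exact LinearMap.congr_fun (hc h h') (f v)

variable (hE : ⨆ f : IntertwiningMap ρ σ, LinearMap.range f.toLinearMap = ⊤)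
include hE

theorem ext_of_iSup_range_eq_top {a b : W →ₗ[K] U}
    (h : ∀ f : IntertwiningMap ρ σ, a ∘ₗ f.toLinearMap = b ∘ₗ f.toLinearMap) : a = b := by
  rw [← sub_eq_zero, ← LinearMap.ker_eq_top, eq_top_iff, ← hE, iSup_le_iff]
  rintro f _ ⟨v, rfl⟩
  simpa [sub_eq_zero] using LinearMap.congr_fun (h f) v

theorem ker_le_ker_of_iSup_range_eq_top : ρ.ker ≤ σ.ker := fun g hg => by
  rw [MonoidHom.mem_ker] at hg ⊢
  refine ext_of_iSup_range_eq_top hE fun f => LinearMap.ext fun v => ?_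
  simp [← f.isIntertwining, hg]

theorem ker_compRep_le (π : Representation K H W) (hπ : ∀ h g, Commute (π h) (σ g)) :
    (compRep ρ π hπ).ker ≤ π.ker := fun h hh => by
  rw [MonoidHom.mem_ker] at hh ⊢
  refine ext_of_iSup_range_eq_top hE fun f => LinearMap.ext fun v => ?_
  simpa using congrArg (fun f : IntertwiningMap ρ σ => f v) (LinearMap.congr_fun hh f)

end IntertwiningMap

end

variable {K : Type u} [Field K] {V : Type v} [AddCommGroup V] [Module K V]
  {ι : Type w} {G : ι → Type x} [∀ i, Group (G i)]

/-- `derivedSeries (G i) n ≤ (ρ i).ker` for some `n` says that the image of `ρ i` is solvable. -/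
structure IsCommutingNonsolvable (ρ : ∀ i, Representation K (G i) V) : Prop where
  not_le_ker (i : ι) (n : ℕ) : ¬ derivedSeries (G i) n ≤ (ρ i).ker
  commute : Pairwise fun i j => ∀ x y, Commute (ρ i x) (ρ j y)

theorem iSup_range_intertwiningMap_eq_top {ρ : ∀ i, Representation K (G i) V} {i₀ : ι}
    (hc : ∀ i, i ≠ i₀ → ∀ x y, Commute (ρ i x) (ρ i₀ y))
    (hirr : ∀ W₀ : Submodule K V, (∀ i g, W₀ ≤ W₀.comap (ρ i g)) → W₀ = ⊥ ∨ W₀ = ⊤)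
    {W₀ : Submodule K V} (hW₀ : ∀ g, W₀ ≤ W₀.comap (ρ i₀ g)) (hbot : W₀ ≠ ⊥) :
    ⨆ f : IntertwiningMap ((ρ i₀).subrepresentation W₀ hW₀) (ρ i₀),
      LinearMap.range f.toLinearMap = ⊤ := by
  refine (hirr _ fun i g => iSup_le fun f => ?_).resolve_left (ne_bot_of_le_ne_bot hbot ?_)
  · rintro _ ⟨v, rfl⟩
    by_cases hi : i = i₀
    · subst hi
      exact Submodule.mem_iSup_of_mem f ⟨_, IntertwiningMap.isIntertwining _ _ f g v⟩
    · exact Submodule.mem_iSup_of_mem (IntertwiningMap.compRep _ (ρ i) (hc i hi) g f) ⟨v, rfl⟩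
  · exact le_iSup_of_le (subtypeIntertwiningMap _ W₀ hW₀) fun w hw => ⟨⟨w, hw⟩, rfl⟩

namespace IsCommutingNonsolvable

variable [Fintype ι] [FiniteDimensional K V] {ρ : ∀ i, Representation K (G i) V}
  (hρ : IsCommutingNonsolvable ρ)
  (IH : ∀ (U : Type v) [AddCommGroup U] [Module K U] [FiniteDimensional K U],
    finrank K U < finrank K V → ∀ {κ : Type w} [Fintype κ] {H : κ → Type x} [∀ k, Group (H k)]
    {τ : ∀ k, Representation K (H k) U}, IsCommutingNonsolvable τ →
      2 * Fintype.card κ ≤ finrank K U)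
include hρ IH

theorem two_mul_card_le_of_invariant (W₀ : Submodule K V)
    (hW₀ : ∀ i g, W₀ ≤ W₀.comap (ρ i g)) (hbot : W₀ ≠ ⊥) (htop : W₀ ≠ ⊤) :
    2 * Fintype.card ι ≤ finrank K V := by
  classical
  let p i := ∀ n, ¬ derivedSeries (G i) n ≤ ((ρ i).subrepresentation W₀ (hW₀ i)).ker
  have hsub := IH W₀ (Submodule.finrank_lt htop)
    (τ := fun i : {i // p i} => (ρ i).subrepresentation W₀ (hW₀ i))
    ⟨fun i => i.2, fun i j hij =>
      commute_subrepresentation (hρ.commute (Subtype.coe_ne_coe.mpr hij)) _ _ _⟩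
  have hW₀pos : 1 ≤ finrank K W₀ := Submodule.one_le_finrank_iff.mpr hbot
  have hdim := W₀.finrank_quotient_add_finrank
  have hquot := IH (V ⧸ W₀) (by omega)
    (τ := fun i : {i // ¬ p i} => (ρ i).quotient W₀ (hW₀ i))
    ⟨fun i => ((ρ i).not_le_ker_subrepresentation_or_quotient W₀ (hW₀ i)
        (hρ.not_le_ker i)).resolve_left i.2,
      fun i j hij => commute_quotient (hρ.commute (Subtype.coe_ne_coe.mpr hij)) _ _ _⟩
  have := Fintype.card_subtype_compl p
  have := Fintype.card_subtype_le p
  omega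

theorem two_mul_card_le_of_irreducible [IsAlgClosed K] [Nontrivial V]
    (hirr : ∀ W₀ : Submodule K V, (∀ i g, W₀ ≤ W₀.comap (ρ i g)) → W₀ = ⊥ ∨ W₀ = ⊤) (i₀ : ι) :
    2 * Fintype.card ι ≤ finrank K V := by
  classical
  obtain ⟨W₀, hW₀, hbot, _⟩ := (ρ i₀).exists_isIrreducible_subrepresentation
  have : Nontrivial W₀ := Submodule.nontrivial_iff_ne_bot.mpr hbot
  let τ := (ρ i₀).subrepresentation W₀ hW₀
  let π (i : {i // i ≠ i₀}) : Representation K (G i) (IntertwiningMap τ (ρ i₀)) :=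
    IntertwiningMap.compRep τ (ρ i) fun x y => hρ.commute i.2 x y
  have hE := iSup_range_intertwiningMap_eq_top (fun i hi => hρ.commute hi) hirr hW₀ hbot
  have hπ : IsCommutingNonsolvable π :=
    ⟨fun i n h => hρ.not_le_ker i n (h.trans (IntertwiningMap.ker_compRep_le hE _ _)),
     fun i j hij => IntertwiningMap.commute_compRep _ _ (hρ.commute (Subtype.coe_ne_coe.mpr hij))⟩
  have hk : 2 ≤ finrank K W₀ := by
    by_contra! hk
    have h1 : finrank K W₀ = 1 := le_antisymm (by omega) (Submodule.one_le_finrank_iff.mpr hbot)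
    exact hρ.not_le_ker i₀ 1 ((derivedSeries_succ_le_ker τ le_top fun x _ y _ =>
      Module.End.commute_of_finrank_eq_one h1 _ _).trans
        (IntertwiningMap.ker_le_ker_of_iSup_range_eq_top hE))
  have hm : 1 ≤ finrank K (IntertwiningMap τ (ρ i₀)) := by
    obtain ⟨w, hw⟩ := exists_ne (0 : W₀)
    have hincl : subtypeIntertwiningMap _ W₀ hW₀ ≠ 0 := fun h =>
      hw (Subtype.ext (congrArg (fun f => f w) h))
    have := nontrivial_of_ne _ _ hincl
    exact finrank_pos
  have hmk := (Nat.mul_le_mul_left _ hk).trans (IntertwiningMap.finrank_mul_finrank_le τ (ρ i₀))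
  have hIH := IH _ (by omega) hπ
  have hcard : Fintype.card {i // i ≠ i₀} = Fintype.card ι - 1 := by simp
  have := Fintype.card_pos_iff.mpr ⟨i₀⟩
  omega

end IsCommutingNonsolvable

theorem IsCommutingNonsolvable.two_mul_card_le [IsAlgClosed K] [Fintype ι]
    [FiniteDimensional K V] {ρ : ∀ i, Representation K (G i) V} (hρ : IsCommutingNonsolvable ρ) :
    2 * Fintype.card ι ≤ finrank K V := by
  induction hd : finrank K V using Nat.strong_induction_on generalizing V ι with
  | _ d IH =>
  subst hd
  have IH' := fun (U : Type v) [AddCommGroup U] [Module K U] [FiniteDimensional K U]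
    (hU : finrank K U < finrank K V) {κ : Type w} [Fintype κ] {H : κ → Type x}
    [∀ k, Group (H k)] {τ : ∀ k, Representation K (H k) U} (hτ : IsCommutingNonsolvable τ) =>
    IH _ hU hτ rfl
  rcases isEmpty_or_nonempty ι with hι | ⟨⟨i₀⟩⟩
  · simp
  have : Nontrivial V := by
    by_contra hV
    rw [not_nontrivial_iff_subsingleton] at hV
    exact hρ.not_le_ker i₀ 0 fun g _ => Subsingleton.elim (ρ i₀ g) 1
  by_cases hred : ∃ W₀ : Submodule K V, (∀ i g, W₀ ≤ W₀.comap (ρ i g)) ∧ W₀ ≠ ⊥ ∧ W₀ ≠ ⊤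
  · obtain ⟨W₀, hW₀, hbot, htop⟩ := hred
    exact hρ.two_mul_card_le_of_invariant IH' W₀ hW₀ hbot htop
  · exact hρ.two_mul_card_le_of_irreducible IH'
      (fun W₀ hW₀ => or_iff_not_and_not.mpr fun h => hred ⟨W₀, hW₀, h⟩) i₀

end Representation

theorem stmt_4 (n d : ℕ) (H : Fin n → Type) [∀ i, Group (H i)]
    (hH : ∀ i, ¬ IsSolvable (H i))
    (ρ : ((i : Fin n) → H i) →* Matrix.GeneralLinearGroup (Fin d) ℂ)
    (hρ : Function.Injective ρ) :
    2 * n ≤ d := by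
  let ρ' := (Units.coeHom _).comp (Matrix.GeneralLinearGroup.toLin.toMonoidHom.comp ρ)
  have hfamily :
      Representation.IsCommutingNonsolvable fun i => ρ'.comp (MonoidHom.mulSingle H i) := by
    refine ⟨fun i k hk => hH i ((Group.isSolvable_def _).mpr ⟨k, eq_bot_iff.mpr fun x hx => ?_⟩),
      fun i j hij x y => (Pi.mulSingle_commute hij x y).map ρ'⟩
    have hx : ρ' (Pi.mulSingle i x) = ρ' 1 := by simpa using hk hx
    exact Pi.mulSingle_injective i ((hρ (Matrix.GeneralLinearGroup.toLin.injective
      (Units.ext hx))).trans (Pi.mulSingle_one i).symm)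
  simpa using hfamily.two_mul_card_le
end
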